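/- arXiv:math/0310398 — 3 statements merged into one kernel-verified Lean document; each statement's English description precedes it below -/
import Mathlib

section
/- For every 2×2-matrix-valued function F holomorphic on some open neighborhood of X, there exists ρ > 0 such that the function (z, w) ↦ I₂ − ρ² F(z) F(w)* belongs to the cone 𝒞. -/
/-!
`𝒞` is a convex cone containing every kernel `G(z) G(w)*` (take `ψ = 0`) and every
`(1 - ψ(z) conj ψ(w)) P` with `P` a constant of the form `E E*`. With `D = diag(1, -1)`, the
pinching identity `Y + D Y D = 2 diag Y` gives
`I - ρ² F(z) F(w)* = ρ² (D F)(z) (D F)(w)* + ½ ∑_{j,k} (1 - 4ρ² F_jk(z) conj F_jk(w)) E_jj`,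
and `|2ρ F_jk| ≤ 1` on the compact set `X` as soon as `2ρ` is at most the reciprocal of a bound
for the entries of `F` there.
-/

noncomputable section

open scoped ComplexConjugate Matrix

/-- The open unit disk with two closed disks (centered at `c₁`, `c₂` on the real axis,
with radii `r₁`, `r₂`) removed. -/
def Rdom (c₁ c₂ r₁ r₂ : ℝ) : Set ℂ :=
  {z : ℂ | ‖z‖ < 1 ∧ r₁ < ‖z - (c₁ : ℂ)‖ ∧ r₂ < ‖z - (c₂ : ℂ)‖}

/-- The boundary `B = B₀ ∪ B₁ ∪ B₂` of `Rdom`. -/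
def Bbnd (c₁ c₂ r₁ r₂ : ℝ) : Set ℂ :=
  {z : ℂ | ‖z‖ = 1} ∪ {z : ℂ | ‖z - (c₁ : ℂ)‖ = r₁} ∪
    {z : ℂ | ‖z - (c₂ : ℂ)‖ = r₂}

/-- The closure `X = R ∪ B`. -/
def Xcl (c₁ c₂ r₁ r₂ : ℝ) : Set ℂ := Rdom c₁ c₂ r₁ r₂ ∪ Bbnd c₁ c₂ r₁ r₂

/-- The standing assumptions on the parameters. -/
def GoodParams (c₁ c₂ r₁ r₂ : ℝ) : Prop :=
  -1 < c₁ ∧ c₁ < 0 ∧ 0 < c₂ ∧ c₂ < 1 ∧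
    0 < r₁ ∧ r₁ < min |c₁| (1 - |c₁|) ∧ 0 < r₂ ∧ r₂ < min |c₂| (1 - |c₂|)

/-- Membership in the cone `𝒞`: on `R × R`, `Γ` is a finite sum of terms
`H(z)(1 − ψ(z) conj(ψ(w))) H(w)*` where `ψ` is scalar holomorphic on a neighborhood of `X` with
`|ψ| ≤ 1` on `X`, and `H` is a `2×2`-matrix-valued function holomorphic on a neighborhood of `X`. -/
def InCone (c₁ c₂ r₁ r₂ : ℝ) (Γ : ℂ → ℂ → Matrix (Fin 2) (Fin 2) ℂ) : Prop :=
  ∃ (n : ℕ) (ψ : Fin n → ℂ → ℂ) (F : Fin n → ℂ → Matrix (Fin 2) (Fin 2) ℂ),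
    (∀ i : Fin n, ∃ U : Set ℂ, IsOpen U ∧ Xcl c₁ c₂ r₁ r₂ ⊆ U ∧ DifferentiableOn ℂ (ψ i) U) ∧
    (∀ i : Fin n, ∀ z ∈ Xcl c₁ c₂ r₁ r₂, ‖ψ i z‖ ≤ 1) ∧
    (∀ i : Fin n, ∃ U : Set ℂ, IsOpen U ∧ Xcl c₁ c₂ r₁ r₂ ⊆ U ∧
      ∀ j k : Fin 2, DifferentiableOn ℂ (fun z => F i z j k) U) ∧
    ∀ z ∈ Rdom c₁ c₂ r₁ r₂, ∀ w ∈ Rdom c₁ c₂ r₁ r₂,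
      Γ z w = ∑ i : Fin n, (1 - ψ i z * (starRingEnd ℂ) (ψ i w)) • (F i z * (F i w)ᴴ)

lemma Xcl_eq (c₁ c₂ r₁ r₂ : ℝ) :
    Xcl c₁ c₂ r₁ r₂ = Metric.closedBall 0 1 ∩ {z : ℂ | r₁ ≤ ‖z - (c₁ : ℂ)‖} ∩
      {z : ℂ | r₂ ≤ ‖z - (c₂ : ℂ)‖} ∪ Bbnd c₁ c₂ r₁ r₂ := by
  ext z
  simp only [Xcl, Rdom, Bbnd, Metric.mem_closedBall, dist_zero_right, Set.mem_union,
    Set.mem_inter_iff, Set.mem_ofPred_eq]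
  grind

lemma Bbnd_eq_sphere_union (c₁ c₂ r₁ r₂ : ℝ) :
    Bbnd c₁ c₂ r₁ r₂ =
      Metric.sphere 0 1 ∪ Metric.sphere (c₁ : ℂ) r₁ ∪ Metric.sphere (c₂ : ℂ) r₂ := by
  simp only [Bbnd, Metric.sphere, dist_eq_norm, sub_zero]

lemma isCompact_Xcl (c₁ c₂ r₁ r₂ : ℝ) : IsCompact (Xcl c₁ c₂ r₁ r₂) := by
  have hB : IsCompact (Bbnd c₁ c₂ r₁ r₂) := by
    rw [Bbnd_eq_sphere_union]
    exact ((isCompact_sphere _ _).union (isCompact_sphere _ _)).union (isCompact_sphere _ _)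
  rw [Xcl_eq]
  refine (((isCompact_closedBall _ _).inter_right ?_).inter_right ?_).union hB <;>
    exact isClosed_le continuous_const (by fun_prop)

section Cone

variable {c₁ c₂ r₁ r₂ : ℝ}

lemma inCone_zero : InCone c₁ c₂ r₁ r₂ 0 :=
  ⟨0, finZeroElim, finZeroElim, finZeroElim, finZeroElim, finZeroElim, by simp⟩

lemma InCone.add {Γ Δ : ℂ → ℂ → Matrix (Fin 2) (Fin 2) ℂ} (hΓ : InCone c₁ c₂ r₁ r₂ Γ)
    (hΔ : InCone c₁ c₂ r₁ r₂ Δ) : InCone c₁ c₂ r₁ r₂ (Γ + Δ) := by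
  obtain ⟨n, ψ, H, hψ, hψ_le, hH, hΓ⟩ := hΓ
  obtain ⟨m, φ, G, hφ, hφ_le, hG, hΔ⟩ := hΔ
  refine ⟨n + m, Fin.append ψ φ, Fin.append H G, Fin.addCases (by simpa using hψ)
    (by simpa using hφ), Fin.addCases (by simpa using hψ_le) (by simpa using hφ_le),
    Fin.addCases (by simpa using hH) (by simpa using hG), fun z hz w hw => ?_⟩
  simp only [Pi.add_apply, hΓ z hz w hw, hΔ z hz w hw, Fin.sum_univ_add, Fin.append_left,
    Fin.append_right]

lemma inCone_sum {ι : Type*} (s : Finset ι) {Γ : ι → ℂ → ℂ → Matrix (Fin 2) (Fin 2) ℂ}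
    (hΓ : ∀ i ∈ s, InCone c₁ c₂ r₁ r₂ (Γ i)) : InCone c₁ c₂ r₁ r₂ (∑ i ∈ s, Γ i) := by
  classical
  induction s using Finset.induction_on with
  | empty => simpa using inCone_zero
  | insert i s hi ih =>
    rw [Finset.sum_insert hi]
    exact (hΓ i (s.mem_insert_self i)).add (ih fun j hj => hΓ j (Finset.mem_insert_of_mem hj))

lemma InCone.smul {Γ : ℂ → ℂ → Matrix (Fin 2) (Fin 2) ℂ} (hΓ : InCone c₁ c₂ r₁ r₂ Γ) {t : ℝ}
    (ht : 0 ≤ t) : InCone c₁ c₂ r₁ r₂ (t • Γ) := by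
  obtain ⟨n, ψ, H, hψ, hψ_le, hH, hΓ⟩ := hΓ
  refine ⟨n, ψ, fun i z => (√t : ℂ) • H i z, hψ, hψ_le, fun i => ?_, fun z hz w hw => ?_⟩
  · obtain ⟨U, hU, hXU, hHU⟩ := hH i
    exact ⟨U, hU, hXU, fun j k => by simpa using (hHU j k).const_mul (√t : ℂ)⟩
  · have hsq : (√t : ℂ) * (√t : ℂ) = t := by exact_mod_cast Real.mul_self_sqrt ht
    simp only [Pi.smul_apply, hΓ z hz w hw, Finset.smul_sum, Matrix.conjTranspose_smul,
      Complex.star_def, Complex.conj_ofReal, Matrix.smul_mul, Matrix.mul_smul, smul_smul, hsq]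
    refine Finset.sum_congr rfl fun i _ => ?_
    rw [mul_smul, Complex.coe_smul, smul_comm]

lemma inCone_single {ψ : ℂ → ℂ} {H : ℂ → Matrix (Fin 2) (Fin 2) ℂ}
    (hψ : ∃ U : Set ℂ, IsOpen U ∧ Xcl c₁ c₂ r₁ r₂ ⊆ U ∧ DifferentiableOn ℂ ψ U)
    (hψ_le : ∀ z ∈ Xcl c₁ c₂ r₁ r₂, ‖ψ z‖ ≤ 1)
    (hH : ∃ U : Set ℂ, IsOpen U ∧ Xcl c₁ c₂ r₁ r₂ ⊆ U ∧
      ∀ j k : Fin 2, DifferentiableOn ℂ (fun z => H z j k) U) :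
    InCone c₁ c₂ r₁ r₂ fun z w => (1 - ψ z * conj (ψ w)) • (H z * (H w)ᴴ) :=
  ⟨1, fun _ => ψ, fun _ => H, fun _ => hψ, fun _ => hψ_le, fun _ => hH, by simp⟩

lemma inCone_mul_conjTranspose {H : ℂ → Matrix (Fin 2) (Fin 2) ℂ}
    (hH : ∃ U : Set ℂ, IsOpen U ∧ Xcl c₁ c₂ r₁ r₂ ⊆ U ∧
      ∀ j k : Fin 2, DifferentiableOn ℂ (fun z => H z j k) U) :
    InCone c₁ c₂ r₁ r₂ fun z w => H z * (H w)ᴴ := by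
  simpa using inCone_single (ψ := 0)
    ⟨Set.univ, isOpen_univ, Set.subset_univ _, differentiableOn_const 0⟩ (by simp) hH

end Cone

open Matrix in
lemma one_sub_smul_mul_conjTranspose_eq (F : ℂ → Matrix (Fin 2) (Fin 2) ℂ) (ρ : ℝ) :
    (fun z w => 1 - (ρ : ℂ) ^ 2 • (F z * (F w)ᴴ)) =
      (1 / 2 : ℝ) • ∑ p : Fin 2 × Fin 2,
        (fun z w => (1 - 2 * ρ * F z p.1 p.2 * conj (2 * ρ * F w p.1 p.2)) •
          (single p.1 p.1 (1 : ℂ) * (single p.1 p.1 (1 : ℂ))ᴴ)) +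
      fun z w => ((ρ : ℂ) • (diagonal ![1, -1] * F z)) * ((ρ : ℂ) • (diagonal ![1, -1] * F w))ᴴ := by
  funext z w
  ext i j
  fin_cases i <;> fin_cases j <;>
    simp [Fintype.sum_prod_type, Fin.sum_univ_two, mul_apply, one_apply, map_ofNat] <;> ring

lemma exists_pos_bound_of_continuousOn_entries {X E m n : Type*} [TopologicalSpace X]
    [SeminormedAddCommGroup E] [Finite m] [Finite n] {K : Set X} (hK : IsCompact K)
    {F : X → Matrix m n E} (hF : ∀ j k, ContinuousOn (fun z => F z j k) K) :
    ∃ M > 0, ∀ z ∈ K, ∀ j k, ‖F z j k‖ ≤ M := by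
  choose C hC using fun p : m × n => hK.exists_bound_of_continuousOn (hF p.1 p.2)
  obtain ⟨M, hM⟩ := Finite.bddAbove_range C
  exact ⟨max M 1, by positivity, fun z hz j k =>
    (hC (j, k) z hz).trans ((hM ⟨(j, k), rfl⟩).trans (le_max_left _ _))⟩

theorem cone_absorbing_general (c₁ c₂ r₁ r₂ : ℝ)
    (F : ℂ → Matrix (Fin 2) (Fin 2) ℂ)
    (hF : ∃ U : Set ℂ, IsOpen U ∧ Xcl c₁ c₂ r₁ r₂ ⊆ U ∧
      ∀ j k : Fin 2, DifferentiableOn ℂ (fun z => F z j k) U) :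
    ∃ ρ : ℝ, 0 < ρ ∧
      InCone c₁ c₂ r₁ r₂ (fun z w => 1 - ((ρ : ℂ) ^ 2) • (F z * (F w)ᴴ)) := by
  obtain ⟨U, hU, hXU, hFU⟩ := hF
  obtain ⟨M, hM, hFM⟩ := exists_pos_bound_of_continuousOn_entries (isCompact_Xcl c₁ c₂ r₁ r₂)
    fun j k => (hFU j k).continuousOn.mono hXU
  refine ⟨(2 * M)⁻¹, by positivity, ?_⟩
  set ρ := (2 * M)⁻¹
  have hψ_le (z : ℂ) (hz : z ∈ Xcl c₁ c₂ r₁ r₂) (j k : Fin 2) : ‖2 * ρ * F z j k‖ ≤ 1 := by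
    calc ‖2 * ρ * F z j k‖ = 2 * ρ * ‖F z j k‖ := by
          rw [norm_mul, norm_mul, Complex.norm_ofNat, Complex.norm_real,
            Real.norm_of_nonneg (by positivity)]
      _ ≤ 2 * ρ * M := by gcongr; exact hFM z hz j k
      _ = 1 := by simp only [ρ]; field_simp
  rw [one_sub_smul_mul_conjTranspose_eq]
  refine ((inCone_sum _ fun p _ => inCone_single ?_ ?_ ?_).smul (by norm_num)).add
    (inCone_mul_conjTranspose ⟨U, hU, hXU, fun j k => ?_⟩)
  · exact ⟨U, hU, hXU, (hFU _ _).const_mul _⟩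
  · exact fun z hz => hψ_le z hz _ _
  · exact ⟨U, hU, hXU, fun _ _ => differentiableOn_const _⟩
  · simpa [Matrix.diagonal_mul] using ((hFU j k).const_mul _).const_mul _

/-- For every `2×2`-matrix-valued function `F` holomorphic on a neighborhood
of `X`, there exists `ρ > 0` such that `I − ρ²F(z)F(w)*` belongs to the cone `𝒞`. -/
theorem cone_absorbing (c₁ c₂ r₁ r₂ : ℝ) (h : GoodParams c₁ c₂ r₁ r₂)
    (F : ℂ → Matrix (Fin 2) (Fin 2) ℂ)
    (hF : ∃ U : Set ℂ, IsOpen U ∧ Xcl c₁ c₂ r₁ r₂ ⊆ U ∧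
      ∀ j k : Fin 2, DifferentiableOn ℂ (fun z => F z j k) U) :
    ∃ ρ : ℝ, 0 < ρ ∧
      InCone c₁ c₂ r₁ r₂ (fun z w => 1 - ((ρ : ℂ) ^ 2) • (F z * (F w)ᴴ)) :=
  cone_absorbing_general c₁ c₂ r₁ r₂ F hF

end
end

section
/- Suppose φ is holomorphic on an open neighborhood of X, |φ(z)| = 1 for all z ∈ B, φ(0) = 0, φ(1) = 1, and {z ∈ X : φ(z) = 1} = {1, p₁, p₂} with p₁ ∈ B₁ and p₂ ∈ B₂. If every zero of φ in R is real, then p₁ and p₂ are real; that is, p₁ ∈ {c₁ − r₁, c₁ + r₁} and p₂ ∈ {c₂ − r₂, c₂ + r₂}. -/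
noncomputable section

open scoped ComplexConjugate Matrix

/-- The two inner boundary circles. -/
def B1 (c₁ r₁ : ℝ) : Set ℂ := {z : ℂ | ‖z - (c₁ : ℂ)‖ = r₁}
def B2 (c₂ r₂ : ℝ) : Set ℂ := {z : ℂ | ‖z - (c₂ : ℂ)‖ = r₂}

/-! With `ψ = conj ∘ φ ∘ conj`, both `φ` and `ψ` are holomorphic near the closure of `R` and
unimodular on `B`, and since the zeros of `φ` in `R` are real, `φ` and `ψ` have the same zeros
with the same multiplicities in `R`. So `φ / ψ` extends holomorphically across `R`; applying the
maximum principle to it and to `ψ / φ` shows that it is a unimodular constant, which is `1`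
because `φ 1 = ψ 1 = 1`. Hence `φ = ψ` on the closure of `R`, so `φ (conj pᵢ) = conj (φ pᵢ) = 1`.
As `conj pᵢ` lies on `Bᵢ` too and `pᵢ` is the only point of `Bᵢ` where `φ = 1`, `pᵢ` is real. -/

open Filter Set Topology Metric

section NormalForm
variable {𝕜 : Type*} [NontriviallyNormedField 𝕜] {f g : 𝕜 → 𝕜} {U : Set 𝕜} {x : 𝕜}

theorem analyticAt_toMeromorphicNFOn_div (hf : AnalyticOnNhd 𝕜 f U) (hg : AnalyticOnNhd 𝕜 g U)
    (hx : x ∈ U) (hfin : analyticOrderAt g x ≠ ⊤)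
    (hle : analyticOrderAt g x ≤ analyticOrderAt f x) :
    AnalyticAt 𝕜 (toMeromorphicNFOn (f / g) U) x := by
  rw [← (meromorphicNFOn_toMeromorphicNFOn (f / g) U hx).meromorphicOrderAt_nonneg_iff_analyticAt,
    meromorphicOrderAt_toMeromorphicNFOn (hf.meromorphicOn.div hg.meromorphicOn) hx,
    meromorphicOrderAt_div (hf x hx).meromorphicAt (hg x hx).meromorphicAt,
    (hf x hx).meromorphicOrderAt_eq, (hg x hx).meromorphicOrderAt_eq]
  lift analyticOrderAt g x to ℕ using hfin with n
  revert hle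
  induction analyticOrderAt f x using ENat.recTopCoe with
  | top => simp
  | coe m =>
    intro hle
    have : n ≤ m := by exact_mod_cast hle
    simp only [ENat.map_natCast]
    exact_mod_cast (show (0 : ℤ) ≤ m - n by omega)

theorem toMeromorphicNFOn_div_eq_of_ne_zero (hf : AnalyticOnNhd 𝕜 f U) (hg : AnalyticOnNhd 𝕜 g U)
    (hx : x ∈ U) (hgx : g x ≠ 0) : toMeromorphicNFOn (f / g) U x = f x / g x := by
  rw [toMeromorphicNFOn_eq_toMeromorphicNFAt (hf.meromorphicOn.div hg.meromorphicOn) hx,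
    toMeromorphicNFAt_eq_self.2 ((hf x hx).div (hg x hx) hgx).meromorphicNFAt, Pi.div_apply]

theorem analyticOrderAt_ne_top_of_isPreconnected {R : Set 𝕜} (hR : IsPreconnected R)
    (hf : AnalyticOnNhd 𝕜 f (closure R)) {p : 𝕜} (hp : p ∈ closure R) (hfp : f p ≠ 0)
    (hx : x ∈ R) : analyticOrderAt f x ≠ ⊤ := by
  intro htop
  have hzero : EqOn f 0 R := (hf.mono subset_closure).eqOn_zero_of_preconnected_of_eventuallyEq_zero
    hR hx (analyticOrderAt_eq_top.1 htop)
  exact hfp (hzero.of_subset_closure hf.continuousOn continuousOn_const subset_closure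
    Subset.rfl hp)

end NormalForm

section MaxModulus
variable {f g : ℂ → ℂ} {R : Set ℂ}

theorem analyticOnNhd_toMeromorphicNFOn_div_closure
    (hf : AnalyticOnNhd ℂ f (closure R)) (hg : AnalyticOnNhd ℂ g (closure R))
    (hord : ∀ x ∈ R, analyticOrderAt g x ≤ analyticOrderAt f x ∧ analyticOrderAt g x ≠ ⊤)
    (hfr : ∀ z ∈ frontier R, g z ≠ 0) :
    AnalyticOnNhd ℂ (toMeromorphicNFOn (f / g) (closure R)) (closure R) := by
  intro z hz
  refine analyticAt_toMeromorphicNFOn_div hf hg hz ?_ ?_ <;>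
  · rcases (closure_eq_self_union_frontier R ▸ hz) with hzR | hzfr
    · simp [hord z hzR]
    · simp [(hg z hz).analyticOrderAt_eq_zero.2 (hfr z hzfr)]

theorem norm_toMeromorphicNFOn_div_le_one (hRb : Bornology.IsBounded R)
    (hf : AnalyticOnNhd ℂ f (closure R)) (hg : AnalyticOnNhd ℂ g (closure R))
    (hord : ∀ x ∈ R, analyticOrderAt g x ≤ analyticOrderAt f x ∧ analyticOrderAt g x ≠ ⊤)
    (hfr : ∀ z ∈ frontier R, g z ≠ 0 ∧ ‖f z‖ ≤ ‖g z‖) {z : ℂ} (hz : z ∈ closure R) :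
    ‖toMeromorphicNFOn (f / g) (closure R) z‖ ≤ 1 := by
  have hG := analyticOnNhd_toMeromorphicNFOn_div_closure hf hg hord fun w hw => (hfr w hw).1
  refine Complex.norm_le_of_forall_mem_frontier_norm_le hRb
    ⟨(hG.mono subset_closure).differentiableOn, hG.continuousOn⟩ (fun w hw => ?_) hz
  rw [toMeromorphicNFOn_div_eq_of_ne_zero hf hg (frontier_subset_closure hw) (hfr w hw).1,
    norm_div]
  exact div_le_one_of_le₀ (hfr w hw).2 (norm_nonneg _)

theorem eqOn_closure_of_norm_eq_one (hRo : IsOpen R) (hRc : IsPreconnected R)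
    (hRb : Bornology.IsBounded R)
    (hf : AnalyticOnNhd ℂ f (closure R)) (hg : AnalyticOnNhd ℂ g (closure R))
    (hord : ∀ x ∈ R, analyticOrderAt f x = analyticOrderAt g x)
    (hf1 : ∀ z ∈ frontier R, ‖f z‖ = 1) (hg1 : ∀ z ∈ frontier R, ‖g z‖ = 1)
    {p : ℂ} (hp : p ∈ frontier R) (hfgp : f p = g p) :
    EqOn f g (closure R) := by
  have hf0 : ∀ z ∈ frontier R, f z ≠ 0 := fun z hz => norm_ne_zero_iff.1 (by simp [hf1 z hz])
  have hg0 : ∀ z ∈ frontier R, g z ≠ 0 := fun z hz => norm_ne_zero_iff.1 (by simp [hg1 z hz])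
  have hpcl : p ∈ closure R := frontier_subset_closure hp
  have hfin : ∀ x ∈ R, analyticOrderAt g x ≠ ⊤ := fun x hx =>
    analyticOrderAt_ne_top_of_isPreconnected hRc hg hpcl (hg0 p hp) hx
  set G := toMeromorphicNFOn (f / g) (closure R)
  have hGeq : ∀ z ∈ closure R, g z ≠ 0 → G z = f z / g z := fun z hz =>
    toMeromorphicNFOn_div_eq_of_ne_zero hf hg hz
  have hG : AnalyticOnNhd ℂ G (closure R) := analyticOnNhd_toMeromorphicNFOn_div_closure hf hg
    (fun x hx => ⟨(hord x hx).ge, hfin x hx⟩) hg0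
  have hGle : ∀ z ∈ closure R, ‖G z‖ ≤ 1 := fun z hz =>
    norm_toMeromorphicNFOn_div_le_one hRb hf hg (fun x hx => ⟨(hord x hx).ge, hfin x hx⟩)
      (fun w hw => ⟨hg0 w hw, ((hf1 w hw).trans (hg1 w hw).symm).le⟩) hz
  have hG'le : ∀ z ∈ closure R, ‖toMeromorphicNFOn (g / f) (closure R) z‖ ≤ 1 := fun z hz =>
    norm_toMeromorphicNFOn_div_le_one hRb hg hf
      (fun x hx => ⟨(hord x hx).le, hord x hx ▸ hfin x hx⟩)
      (fun w hw => ⟨hf0 w hw, ((hg1 w hw).trans (hf1 w hw).symm).le⟩) hz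
  obtain ⟨c, hgc, hcR⟩ : ∃ c, g c ≠ 0 ∧ c ∈ R :=
    mem_closure_iff_nhds.1 hpcl _ ((hg p hpcl).continuousAt.eventually_ne (hg0 p hp))
  have hcl : c ∈ closure R := subset_closure hcR
  have hfc : f c ≠ 0 := by
    rw [← (hf c hcl).analyticOrderAt_eq_zero, hord c hcR, (hg c hcl).analyticOrderAt_eq_zero]
    exact hgc
  -- `‖f c / g c‖ ≤ 1` and `‖g c / f c‖ ≤ 1` put the maximum of `‖G‖` at the interior point `c`.
  have hGc : ‖G c‖ = 1 := by
    have h₁ := hGle c hcl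
    have h₂ := hG'le c hcl
    rw [hGeq c hcl hgc, norm_div, div_le_one (norm_pos_iff.2 hgc)] at h₁
    rw [toMeromorphicNFOn_div_eq_of_ne_zero hg hf hcl hfc, norm_div,
      div_le_one (norm_pos_iff.2 hfc)] at h₂
    rw [hGeq c hcl hgc, norm_div, le_antisymm h₁ h₂, div_self (norm_ne_zero_iff.2 hgc)]
  have hconst : EqOn G (Function.const ℂ (G c)) (closure R) :=
    (Complex.eqOn_of_isPreconnected_of_isMaxOn_norm hRc hRo
      (hG.mono subset_closure).differentiableOn hcR
      fun z hz => by simpa [hGc] using hGle z (subset_closure hz)).of_subset_closure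
      hG.continuousOn continuousOn_const subset_closure Subset.rfl
  have hGc1 : G c = 1 := by
    simpa [hconst hpcl, hfgp, hg0 p hp] using hGeq p hpcl (hg0 p hp)
  intro z hz
  by_cases hgz : g z = 0
  · have hzR : z ∈ R := by
      by_contra hzR
      exact hg0 z ⟨hz, by rwa [hRo.interior_eq]⟩ hgz
    rw [hgz, ← (hf z hz).analyticOrderAt_ne_zero, hord z hzR,
      (hg z hz).analyticOrderAt_ne_zero]
    exact hgz
  · have := hconst hz
    rwa [Function.const_apply, hGc1, hGeq z hz hgz, div_eq_one_iff_eq hgz] at this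

end MaxModulus

section Conj
variable {f : ℂ → ℂ} {x : ℂ}

theorem AnalyticAt.conj_conj (hf : AnalyticAt ℂ f (conj x)) :
    AnalyticAt ℂ (conj ∘ f ∘ conj) x := by
  rw [Complex.analyticAt_iff_eventually_differentiableAt] at hf ⊢
  filter_upwards [Complex.continuous_conj.continuousAt.eventually hf] with z hz
  exact differentiableAt_conj_conj_iff.2 hz

theorem analyticOrderAt_conj_conj (hf : AnalyticAt ℂ f (conj x)) :
    analyticOrderAt (conj ∘ f ∘ conj) x = analyticOrderAt f (conj x) := by
  have hconj : Tendsto conj (𝓝 x) (𝓝 (conj x)) := Complex.continuous_conj.continuousAt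
  cases h : analyticOrderAt f (conj x) with
  | top =>
    rw [analyticOrderAt_eq_top] at h ⊢
    filter_upwards [hconj.eventually h] with z hz
    simp [hz]
  | coe n =>
    obtain ⟨u, hu, hu0, hfu⟩ := hf.analyticOrderAt_eq_natCast.1 h
    refine hf.conj_conj.analyticOrderAt_eq_natCast.2
      ⟨conj ∘ u ∘ conj, AnalyticAt.conj_conj (by simpa using hu), by simpa using hu0, ?_⟩
    filter_upwards [hconj.eventually hfu] with z hz
    simp [hz]

theorem analyticOrderAt_conj_conj_eq {S : Set ℂ} (hS : ∀ z ∈ S, conj z ∈ S)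
    (hf : ∀ z ∈ S, AnalyticAt ℂ f z) (hreal : ∀ z ∈ S, f z = 0 → z.im = 0) (hx : x ∈ S) :
    analyticOrderAt (conj ∘ f ∘ conj) x = analyticOrderAt f x := by
  rw [analyticOrderAt_conj_conj (hf _ (hS x hx))]
  by_cases him : x.im = 0
  · rw [Complex.conj_eq_iff_im.2 him]
  rw [(hf x hx).analyticOrderAt_eq_zero.2 fun h0 => him (hreal x hx h0),
    (hf _ (hS x hx)).analyticOrderAt_eq_zero.2
      fun h0 => him (by simpa using hreal _ (hS x hx) h0)]

end Conj

namespace Complex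

theorem norm_conj_sub_ofReal (z : ℂ) (c : ℝ) : ‖conj z - c‖ = ‖z - c‖ := by
  simpa using norm_conj (z - c)

theorem eq_ofReal_sub_or_eq_ofReal_add_of_conj_eq {c r : ℝ} {p : ℂ} (hp : p ∈ sphere (c : ℂ) r)
    (hconj : conj p = p) : p = ((c - r : ℝ) : ℂ) ∨ p = ((c + r : ℝ) : ℂ) := by
  obtain ⟨x, rfl⟩ := conj_eq_iff_real.1 hconj
  rw [mem_sphere_iff_norm, ← ofReal_sub, norm_real, Real.norm_eq_abs,
    abs_eq (hp ▸ abs_nonneg _)] at hp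
  rcases hp with hp | hp
  · exact Or.inr (by rw [← hp]; simp)
  · exact Or.inl (by rw [sub_eq_iff_eq_add.1 hp]; push_cast; ring)

theorem norm_sub_ofReal_le_of_re_eq {z u : ℂ} (c : ℝ) (hre : u.re = z.re)
    (him : |z.im| ≤ |u.im|) : ‖z - c‖ ≤ ‖u - c‖ := by
  rw [norm_eq_sqrt_sq_add_sq, norm_eq_sqrt_sq_add_sq]
  simp only [sub_re, ofReal_re, sub_im, ofReal_im, sub_zero, hre]
  exact Real.sqrt_le_sqrt ((add_le_add_iff_left _).2 (sq_le_sq.2 him))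

theorem isPreconnected_norm_preimage_Ico {a b : ℝ} (ha : 0 < a) :
    IsPreconnected ((‖·‖) ⁻¹' Ico a b : Set ℂ) := by
  rcases le_or_gt b a with hba | hab
  · simp [Ico_eq_empty_of_le hba, isPreconnected_empty]
  have hb : 0 < b := ha.trans hab
  have himage : ((‖·‖) ⁻¹' Ico a b : Set ℂ) =
      exp '' (re ⁻¹' Ico (Real.log a) (Real.log b)) := by
    ext w
    simp only [mem_preimage, mem_Ico, mem_image]
    constructor
    · rintro ⟨haw, hwb⟩
      have hw : w ≠ 0 := norm_pos_iff.1 (ha.trans_le haw)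
      refine ⟨log w, ?_, exp_log hw⟩
      rw [log_re]
      exact ⟨Real.log_le_log ha haw, Real.log_lt_log (ha.trans_le haw) hwb⟩
    · rintro ⟨z, ⟨hz₁, hz₂⟩, rfl⟩
      rw [norm_exp]
      exact ⟨(Real.log_le_iff_le_exp ha).1 hz₁, (Real.lt_log_iff_exp_lt hb).1 hz₂⟩
  rw [himage]
  exact ((convex_Ico _ _).linear_preimage reLm).isPreconnected.image _
    continuous_exp.continuousOn

theorem exists_vertical_segment_to_sphere {z : ℂ} {s : ℝ} (hz : ‖z‖ ≤ s) :
    ∃ w : ℂ, ‖w‖ = s ∧ ∀ u ∈ segment ℝ z w, u.re = z.re ∧ |z.im| ≤ |u.im| ∧ ‖u‖ ≤ s := by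
  have hs : 0 ≤ s := (norm_nonneg z).trans hz
  have hsq : z.re ^ 2 + z.im ^ 2 ≤ s ^ 2 := by
    rw [← Real.sqrt_le_left hs, ← norm_eq_sqrt_sq_add_sq]
    exact hz
  set b := √(s ^ 2 - z.re ^ 2)
  have hb : b ^ 2 = s ^ 2 - z.re ^ 2 := Real.sq_sqrt (by nlinarith)
  have hab : |z.im| ≤ b := Real.abs_le_sqrt (by linarith)
  set σ : ℝ := if 0 ≤ z.im then 1 else -1
  have hσ : |σ| = 1 := by simp only [σ]; split_ifs <;> simp
  have hσz : σ * |z.im| = z.im := by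
    simp only [σ]; split_ifs with h
    · simp [abs_of_nonneg h]
    · simp [abs_of_neg (not_le.1 h)]
  refine ⟨⟨z.re, σ * b⟩, ?_, ?_⟩
  · rw [norm_eq_sqrt_sq_add_sq, mul_pow, ← sq_abs σ, hσ, one_pow, one_mul, hb,
      add_sub_cancel, Real.sqrt_sq hs]
  · rw [segment_eq_image']
    rintro _ ⟨θ, ⟨hθ₀, hθ₁⟩, rfl⟩
    have him : (z + θ • (⟨z.re, σ * b⟩ - z)).im = σ * (|z.im| + θ * (b - |z.im|)) := by
      simp only [add_im, smul_im, sub_im]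
      linear_combination (1 - θ) * hσz.symm
    have hlo : |z.im| ≤ |z.im| + θ * (b - |z.im|) := by nlinarith
    have hhi : |z.im| + θ * (b - |z.im|) ≤ b := by nlinarith
    have habs : |(z + θ • (⟨z.re, σ * b⟩ - z) : ℂ).im| = |z.im| + θ * (b - |z.im|) := by
      rw [him, abs_mul, hσ, one_mul, abs_of_nonneg ((abs_nonneg _).trans hlo)]
    refine ⟨by simp, habs ▸ hlo, ?_⟩
    rw [norm_eq_sqrt_sq_add_sq, Real.sqrt_le_left hs, ← sq_abs (im _), habs]
    simp only [add_re, smul_re, sub_re, sub_self, smul_zero, add_zero]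
    nlinarith [pow_le_pow_left₀ ((abs_nonneg _).trans hlo) hhi 2]

end Complex

theorem Rdom_eq (c₁ c₂ r₁ r₂ : ℝ) :
    Rdom c₁ c₂ r₁ r₂ = ball 0 1 ∩ (closedBall (c₁ : ℂ) r₁)ᶜ ∩ (closedBall (c₂ : ℂ) r₂)ᶜ := by
  ext z
  simp [Rdom, dist_eq_norm, and_assoc]

theorem isOpen_Rdom (c₁ c₂ r₁ r₂ : ℝ) : IsOpen (Rdom c₁ c₂ r₁ r₂) := by
  rw [Rdom_eq]
  exact (isOpen_ball.inter isClosed_closedBall.isOpen_compl).inter isClosed_closedBall.isOpen_compl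

theorem isBounded_Rdom (c₁ c₂ r₁ r₂ : ℝ) : Bornology.IsBounded (Rdom c₁ c₂ r₁ r₂) := by
  rw [Rdom_eq]
  exact isBounded_ball.subset (inter_subset_left.trans inter_subset_left)

theorem conj_mem_Rdom {c₁ c₂ r₁ r₂ : ℝ} {z : ℂ} (hz : z ∈ Rdom c₁ c₂ r₁ r₂) :
    conj z ∈ Rdom c₁ c₂ r₁ r₂ := by
  simpa [Rdom, Complex.norm_conj_sub_ofReal] using hz

theorem conj_mem_Bbnd {c₁ c₂ r₁ r₂ : ℝ} {z : ℂ} (hz : z ∈ Bbnd c₁ c₂ r₁ r₂) :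
    conj z ∈ Bbnd c₁ c₂ r₁ r₂ := by
  simpa [Bbnd, Complex.norm_conj_sub_ofReal] using hz

theorem conj_mem_Xcl {c₁ c₂ r₁ r₂ : ℝ} {z : ℂ} (hz : z ∈ Xcl c₁ c₂ r₁ r₂) :
    conj z ∈ Xcl c₁ c₂ r₁ r₂ :=
  hz.imp conj_mem_Rdom conj_mem_Bbnd

theorem frontier_Rdom_subset (c₁ c₂ r₁ r₂ : ℝ) :
    frontier (Rdom c₁ c₂ r₁ r₂) ⊆ Bbnd c₁ c₂ r₁ r₂ := by
  have hcl : closure (Rdom c₁ c₂ r₁ r₂) ⊆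
      {z | ‖z‖ ≤ 1 ∧ r₁ ≤ ‖z - c₁‖ ∧ r₂ ≤ ‖z - c₂‖} := by
    refine closure_minimal (fun z hz => ⟨hz.1.le, hz.2.1.le, hz.2.2.le⟩) ?_
    simp only [ofPred_and]
    refine (isClosed_le continuous_norm continuous_const).inter
      ((isClosed_le continuous_const ?_).inter (isClosed_le continuous_const ?_)) <;> fun_prop
  rintro z ⟨hzcl, hzR⟩
  obtain ⟨h₀, h₁, h₂⟩ := hcl hzcl
  rw [(isOpen_Rdom c₁ c₂ r₁ r₂).interior_eq] at hzR
  simp only [Bbnd, mem_union, mem_ofPred_eq]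
  by_contra! hne
  exact hzR ⟨h₀.lt_of_ne hne.1.1, h₁.lt_of_ne hne.1.2.symm, h₂.lt_of_ne hne.2.symm⟩

theorem closure_Rdom_subset (c₁ c₂ r₁ r₂ : ℝ) : closure (Rdom c₁ c₂ r₁ r₂) ⊆ Xcl c₁ c₂ r₁ r₂ := by
  rw [closure_eq_self_union_frontier]
  exact union_subset_union_right _ (frontier_Rdom_subset c₁ c₂ r₁ r₂)

theorem isPreconnected_Rdom {c₁ c₂ r₁ r₂ : ℝ} (h₁ : |c₁| + r₁ < 1) (h₂ : |c₂| + r₂ < 1) :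
    IsPreconnected (Rdom c₁ c₂ r₁ r₂) := by
  obtain ⟨s, hs, hs1⟩ := exists_between (max_lt (max_lt h₁ h₂) zero_lt_one)
  simp only [max_lt_iff] at hs
  have hA : (‖·‖) ⁻¹' Ico s 1 ⊆ Rdom c₁ c₂ r₁ r₂ := by
    rintro w ⟨hsw, hw1⟩
    have hc (c : ℝ) : s - |c| ≤ ‖w - c‖ := by
      have := norm_sub_norm_le w (c : ℂ)
      rw [Complex.norm_real, Real.norm_eq_abs] at this
      exact (sub_le_sub_right hsw _).trans this
    exact ⟨hw1, by linarith [hc c₁], by linarith [hc c₂]⟩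
  have hsA : (s : ℂ) ∈ (‖·‖) ⁻¹' Ico s 1 := by simp [abs_of_pos hs.2, hs1]
  have hApre := Complex.isPreconnected_norm_preimage_Ico (b := 1) hs.2
  -- The annulus `s ≤ ‖w‖ < 1` lies in `R`, and a vertical segment moving away from the real axis
  -- joins any other point of `R` to it inside `R`.
  refine isPreconnected_of_forall (s : ℂ) fun z hz => ?_
  by_cases hzs : s ≤ ‖z‖
  · exact ⟨_, hA, hsA, ⟨hzs, hz.1⟩, hApre⟩
  obtain ⟨w, hw, hseg⟩ := Complex.exists_vertical_segment_to_sphere (not_le.1 hzs).le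
  have hwA : w ∈ (‖·‖) ⁻¹' Ico s 1 := ⟨hw.ge, hw.trans_lt hs1⟩
  refine ⟨segment ℝ z w ∪ (‖·‖) ⁻¹' Ico s 1, union_subset ?_ hA, Or.inr hsA,
    Or.inl (left_mem_segment ℝ z w),
    (convex_segment z w).isPreconnected.union w (right_mem_segment ℝ z w) hwA hApre⟩
  intro u hu
  obtain ⟨hre, him, hus⟩ := hseg u hu
  exact ⟨hus.trans_lt hs1, hz.2.1.trans_le (Complex.norm_sub_ofReal_le_of_re_eq c₁ hre him),
    hz.2.2.trans_le (Complex.norm_sub_ofReal_le_of_re_eq c₂ hre him)⟩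

theorem B1_eq_sphere (c r : ℝ) : B1 c r = sphere (c : ℂ) r := by
  ext z; simp [B1, mem_sphere_iff_norm]

theorem B2_eq_sphere (c r : ℝ) : B2 c r = sphere (c : ℂ) r := by
  ext z; simp [B2, mem_sphere_iff_norm]

theorem conj_mem_B1 {c r : ℝ} {p : ℂ} (hp : p ∈ B1 c r) : conj p ∈ B1 c r := by
  simpa [B1, Complex.norm_conj_sub_ofReal] using hp

theorem conj_mem_B2 {c r : ℝ} {p : ℂ} (hp : p ∈ B2 c r) : conj p ∈ B2 c r := by
  simpa [B2, Complex.norm_conj_sub_ofReal] using hp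

section GoodParams
variable {c₁ c₂ r₁ r₂ : ℝ} (h : GoodParams c₁ c₂ r₁ r₂) {p₁ p₂ q : ℂ}
include h

theorem GoodParams.bounds :
    0 < r₁ ∧ 0 < r₂ ∧ |c₁| + r₁ < 1 ∧ |c₂| + r₂ < 1 ∧ r₁ + r₂ < c₂ - c₁ := by
  obtain ⟨-, hc₁, hc₂, -, hr₁, hr₁', hr₂, hr₂'⟩ := h
  rw [lt_min_iff] at hr₁' hr₂'
  rw [abs_of_neg hc₁] at hr₁' ⊢
  rw [abs_of_pos hc₂] at hr₂' ⊢
  exact ⟨hr₁, hr₂, by linarith, by linarith, by linarith⟩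

theorem GoodParams.closedBall_subset_ball_left : closedBall (c₁ : ℂ) r₁ ⊆ ball 0 1 :=
  closedBall_subset_ball' (by simpa [add_comm] using h.bounds.2.2.1)

theorem GoodParams.closedBall_subset_ball_right : closedBall (c₂ : ℂ) r₂ ⊆ ball 0 1 :=
  closedBall_subset_ball' (by simpa [add_comm] using h.bounds.2.2.2.1)

theorem GoodParams.disjoint_closedBall :
    Disjoint (closedBall (c₁ : ℂ) r₁) (closedBall (c₂ : ℂ) r₂) := by
  refine closedBall_disjoint_closedBall ?_
  rw [Complex.dist_eq, ← Complex.ofReal_sub, Complex.norm_real, Real.norm_eq_abs, abs_sub_comm,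
    abs_of_pos (by linarith [h.bounds])]
  exact h.bounds.2.2.2.2

theorem GoodParams.one_mem_frontier_Rdom : (1 : ℂ) ∈ frontier (Rdom c₁ c₂ r₁ r₂) := by
  have h1 : (1 : ℂ) ∉ ball 0 1 := by simp
  refine ⟨?_, by rw [(isOpen_Rdom _ _ _ _).interior_eq, Rdom_eq]; exact fun h' => h1 h'.1.1⟩
  rw [Rdom_eq]
  refine closure_mono (s := ((closedBall (c₁ : ℂ) r₁)ᶜ ∩ (closedBall (c₂ : ℂ) r₂)ᶜ) ∩ ball 0 1)
    (fun _ ⟨⟨h₁, h₂⟩, h₀⟩ => by exact ⟨⟨h₀, h₁⟩, h₂⟩)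
    ((isClosed_closedBall.isOpen_compl.inter isClosed_closedBall.isOpen_compl).inter_closure
      ⟨⟨fun h' => h1 (h.closedBall_subset_ball_left h'),
        fun h' => h1 (h.closedBall_subset_ball_right h')⟩, ?_⟩)
  rw [closure_ball _ one_ne_zero]
  simp

theorem GoodParams.mem_closure_Rdom_of_mem_B1 {p : ℂ} (hp : p ∈ B1 c₁ r₁) :
    p ∈ closure (Rdom c₁ c₂ r₁ r₂) := by
  rw [B1_eq_sphere] at hp
  have hpb := sphere_subset_closedBall hp
  rw [Rdom_eq]
  refine closure_mono (s := (ball 0 1 ∩ (closedBall (c₂ : ℂ) r₂)ᶜ) ∩ (closedBall (c₁ : ℂ) r₁)ᶜ)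
    (fun _ ⟨⟨h₀, h₂⟩, h₁⟩ => by exact ⟨⟨h₀, h₁⟩, h₂⟩)
    ((isOpen_ball.inter isClosed_closedBall.isOpen_compl).inter_closure
      ⟨⟨h.closedBall_subset_ball_left hpb, h.disjoint_closedBall.notMem_of_mem_left hpb⟩, ?_⟩)
  rw [closure_compl, interior_closedBall _ h.bounds.1.ne']
  exact fun h' => (ne_of_lt (mem_ball.1 h')) (mem_sphere.1 hp)

theorem GoodParams.mem_closure_Rdom_of_mem_B2 {p : ℂ} (hp : p ∈ B2 c₂ r₂) :
    p ∈ closure (Rdom c₁ c₂ r₁ r₂) := by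
  rw [B2_eq_sphere] at hp
  have hpb := sphere_subset_closedBall hp
  rw [Rdom_eq]
  refine closure_mono (s := (ball 0 1 ∩ (closedBall (c₁ : ℂ) r₁)ᶜ) ∩ (closedBall (c₂ : ℂ) r₂)ᶜ)
    Subset.rfl
    ((isOpen_ball.inter isClosed_closedBall.isOpen_compl).inter_closure
      ⟨⟨h.closedBall_subset_ball_right hpb, h.disjoint_closedBall.notMem_of_mem_right hpb⟩, ?_⟩)
  rw [closure_compl, interior_closedBall _ h.bounds.2.1.ne']
  exact fun h' => (ne_of_lt (mem_ball.1 h')) (mem_sphere.1 hp)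


theorem GoodParams.eq_of_mem_B1 (hp₂ : p₂ ∈ B2 c₂ r₂) (hq : q ∈ ({1, p₁, p₂} : Set ℂ))
    (hq₁ : q ∈ B1 c₁ r₁) : q = p₁ := by
  rw [B1_eq_sphere] at hq₁
  rw [B2_eq_sphere] at hp₂
  rcases hq with rfl | rfl | rfl
  · simpa using h.closedBall_subset_ball_left (sphere_subset_closedBall hq₁)
  · rfl
  · exact absurd (sphere_subset_closedBall hp₂)
      (h.disjoint_closedBall.notMem_of_mem_left (sphere_subset_closedBall hq₁))

theorem GoodParams.eq_of_mem_B2 (hp₁ : p₁ ∈ B1 c₁ r₁) (hq : q ∈ ({1, p₁, p₂} : Set ℂ))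
    (hq₂ : q ∈ B2 c₂ r₂) : q = p₂ := by
  rw [B2_eq_sphere] at hq₂
  rw [B1_eq_sphere] at hp₁
  rcases hq with rfl | rfl | rfl
  · simpa using h.closedBall_subset_ball_right (sphere_subset_closedBall hq₂)
  · exact absurd (sphere_subset_closedBall hp₁)
      (h.disjoint_closedBall.notMem_of_mem_right (sphere_subset_closedBall hq₂))
  · rfl

end GoodParams

theorem real_points_of_real_zeros_general (c₁ c₂ r₁ r₂ : ℝ) (h : GoodParams c₁ c₂ r₁ r₂)
    (φ : ℂ → ℂ)
    (hφ : ∃ U : Set ℂ, IsOpen U ∧ Xcl c₁ c₂ r₁ r₂ ⊆ U ∧ DifferentiableOn ℂ φ U)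
    (hmod : ∀ z ∈ Bbnd c₁ c₂ r₁ r₂, ‖φ z‖ = 1)
    (hφ1 : φ 1 = 1)
    (p₁ p₂ : ℂ) (hp₁ : p₁ ∈ B1 c₁ r₁) (hp₂ : p₂ ∈ B2 c₂ r₂)
    (hone : {z ∈ Xcl c₁ c₂ r₁ r₂ | φ z = 1} = {(1 : ℂ), p₁, p₂})
    (hreal : ∀ z ∈ Rdom c₁ c₂ r₁ r₂, φ z = 0 → z.im = 0) :
    (p₁ = ((c₁ - r₁ : ℝ) : ℂ) ∨ p₁ = ((c₁ + r₁ : ℝ) : ℂ)) ∧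
      (p₂ = ((c₂ - r₂ : ℝ) : ℂ) ∨ p₂ = ((c₂ + r₂ : ℝ) : ℂ)) := by
  obtain ⟨U, hUo, hXU, hφU⟩ := hφ
  obtain ⟨-, -, h₁, h₂, -⟩ := h.bounds
  set R := Rdom c₁ c₂ r₁ r₂
  have hclX : closure R ⊆ Xcl c₁ c₂ r₁ r₂ := closure_Rdom_subset c₁ c₂ r₁ r₂
  have hfr : frontier R ⊆ Bbnd c₁ c₂ r₁ r₂ := frontier_Rdom_subset c₁ c₂ r₁ r₂
  have hφa : AnalyticOnNhd ℂ φ U := hφU.analyticOnNhd hUo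
  have hφa' : ∀ z ∈ closure R, AnalyticAt ℂ φ (conj z) := fun z hz =>
    hφa _ (hXU (conj_mem_Xcl (hclX hz)))
  have hord : ∀ x ∈ R, analyticOrderAt φ x = analyticOrderAt (conj ∘ φ ∘ conj) x :=
    fun x hx => (analyticOrderAt_conj_conj_eq (fun _ => conj_mem_Rdom)
      (fun z hz => hφa z (hXU (Or.inl hz))) hreal hx).symm
  have heq : EqOn φ (conj ∘ φ ∘ conj) (closure R) :=
    eqOn_closure_of_norm_eq_one (isOpen_Rdom _ _ _ _) (isPreconnected_Rdom h₁ h₂)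
      (isBounded_Rdom _ _ _ _) (fun z hz => hφa z (hXU (hclX hz)))
      (fun z hz => (hφa' z hz).conj_conj) hord (fun z hz => hmod z (hfr hz))
      (fun z hz => by simpa using hmod _ (conj_mem_Bbnd (hfr hz)))
      h.one_mem_frontier_Rdom (by simp [hφ1])
  have hfix : ∀ q ∈ ({1, p₁, p₂} : Set ℂ), q ∈ closure R → conj q ∈ ({1, p₁, p₂} : Set ℂ) := by
    intro q hq hqR
    rw [← hone] at hq ⊢
    exact ⟨conj_mem_Xcl hq.1, by simpa [hq.2] using (congrArg conj (heq hqR)).symm⟩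
  have hconj₁ : conj p₁ = p₁ := h.eq_of_mem_B1 hp₂
    (hfix p₁ (by simp) (h.mem_closure_Rdom_of_mem_B1 hp₁)) (conj_mem_B1 hp₁)
  have hconj₂ : conj p₂ = p₂ := h.eq_of_mem_B2 hp₁
    (hfix p₂ (by simp) (h.mem_closure_Rdom_of_mem_B2 hp₂)) (conj_mem_B2 hp₂)
  exact ⟨Complex.eq_ofReal_sub_or_eq_ofReal_add_of_conj_eq (B1_eq_sphere c₁ r₁ ▸ hp₁) hconj₁,
    Complex.eq_ofReal_sub_or_eq_ofReal_add_of_conj_eq (B2_eq_sphere c₂ r₂ ▸ hp₂) hconj₂⟩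

/-- If `φ` is holomorphic on a neighborhood of `X`, unimodular on `B`, with
`φ(0) = 0`, `φ(1) = 1` and `φ⁻¹({1}) ∩ X = {1, p₁, p₂}` (`p₁ ∈ B₁`, `p₂ ∈ B₂`), and all zeros of
`φ` in `R` are real, then `p₁ ∈ {c₁ − r₁, c₁ + r₁}` and `p₂ ∈ {c₂ − r₂, c₂ + r₂}`. -/
theorem real_points_of_real_zeros (c₁ c₂ r₁ r₂ : ℝ) (h : GoodParams c₁ c₂ r₁ r₂)
    (φ : ℂ → ℂ)
    (hφ : ∃ U : Set ℂ, IsOpen U ∧ Xcl c₁ c₂ r₁ r₂ ⊆ U ∧ DifferentiableOn ℂ φ U)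
    (hmod : ∀ z ∈ Bbnd c₁ c₂ r₁ r₂, ‖φ z‖ = 1)
    (hφ0 : φ 0 = 0) (hφ1 : φ 1 = 1)
    (p₁ p₂ : ℂ) (hp₁ : p₁ ∈ B1 c₁ r₁) (hp₂ : p₂ ∈ B2 c₂ r₂)
    (hone : {z ∈ Xcl c₁ c₂ r₁ r₂ | φ z = 1} = {(1 : ℂ), p₁, p₂})
    (hreal : ∀ z ∈ Rdom c₁ c₂ r₁ r₂, φ z = 0 → z.im = 0) :
    (p₁ = ((c₁ - r₁ : ℝ) : ℂ) ∨ p₁ = ((c₁ + r₁ : ℝ) : ℂ)) ∧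
      (p₂ = ((c₂ - r₂ : ℝ) : ℂ) ∨ p₂ = ((c₂ + r₂ : ℝ) : ℂ)) :=
  real_points_of_real_zeros_general c₁ c₂ r₁ r₂ h φ hφ hmod hφ1 p₁ p₂ hp₁ hp₂ hone hreal
end
end

section
/- Suppose F : R → M₂(ℂ) is holomorphic and det F is not identically zero on R. Suppose there exist a unitary 2×2 matrix U and holomorphic scalar functions ψ₁, ψ₂ : R → ℂ such that, with D(z) = diag(ψ₁(z), ψ₂(z)), one has F(z) F(w)* = U D(z) D(w)* U* for all z, w ∈ R. Then there exists a constant unitary 2×2 matrix V such that F(z) = U D(z) V for all z ∈ R. -/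
/-!
Put `B z = U D(z)`, so the hypothesis reads `F z (F w)ᴴ = B z (B w)ᴴ`. Fix `z₀` with `F z₀`
invertible. Then `B z₀` is invertible too and `V = (B z₀)⁻¹ F z₀` is unitary, since
`V Vᴴ = (B z₀)⁻¹ B z₀ (B z₀)ᴴ (B z₀)ᴴ⁻¹`. Moreover `V = (B z₀)ᴴ (F z₀)ᴴ⁻¹`, so multiplying
`F z (F z₀)ᴴ = B z (B z₀)ᴴ` on the right by `(F z₀)ᴴ⁻¹` gives `F z = B z V`.
-/

noncomputable section

open scoped ComplexConjugate Matrix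

namespace Matrix

variable {n α : Type*} [Fintype n] [DecidableEq n] [CommRing α] [StarRing α]
  {A B : Matrix n n α}

theorem isUnit_det_of_mul_conjTranspose_eq (hAB : A * Aᴴ = B * Bᴴ) (hA : IsUnit A.det) :
    IsUnit B.det := by
  have hAA : IsUnit (A * Aᴴ).det := by
    rw [det_mul, det_conjTranspose]
    exact hA.mul hA.star
  rw [hAB, det_mul] at hAA
  exact isUnit_of_mul_isUnit_left hAA

theorem nonsing_inv_mul_mem_unitaryGroup (hAB : A * Aᴴ = B * Bᴴ) (hA : IsUnit A.det) :
    B⁻¹ * A ∈ unitaryGroup n α := by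
  have hB := isUnit_det_of_mul_conjTranspose_eq hAB hA
  rw [mem_unitaryGroup_iff, star_eq_conjTranspose, conjTranspose_mul,
    conjTranspose_nonsing_inv, Matrix.mul_assoc, ← Matrix.mul_assoc A, hAB,
    ← Matrix.mul_assoc, nonsing_inv_mul_cancel_left _ _ hB,
    mul_nonsing_inv _ (by rw [det_conjTranspose]; exact hB.star)]

theorem eq_mul_nonsing_inv_mul_of_mul_conjTranspose_eq {C E : Matrix n n α}
    (hAB : A * Aᴴ = B * Bᴴ) (hCE : C * Aᴴ = E * Bᴴ) (hA : IsUnit A.det) :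
    C = E * (B⁻¹ * A) := by
  have hB := isUnit_det_of_mul_conjTranspose_eq hAB hA
  have hAH : IsUnit Aᴴ.det := by rw [det_conjTranspose]; exact hA.star
  have hV : B⁻¹ * A = Bᴴ * Aᴴ⁻¹ := by
    rw [← mul_nonsing_inv_cancel_right Aᴴ (B⁻¹ * A) hAH, Matrix.mul_assoc B⁻¹, hAB,
      nonsing_inv_mul_cancel_left _ _ hB]
  rw [hV, ← Matrix.mul_assoc, ← hCE, mul_nonsing_inv_cancel_right _ _ hAH]

theorem exists_mem_unitaryGroup_eq_mul_of_mul_conjTranspose_eq {X : Type*} {s : Set X}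
    {G D : X → Matrix n n α} {x₀ : X} (hx₀ : x₀ ∈ s) (hG : IsUnit (G x₀).det)
    (h : ∀ x ∈ s, G x * (G x₀)ᴴ = D x * (D x₀)ᴴ) :
    ∃ V ∈ unitaryGroup n α, ∀ x ∈ s, G x = D x * V :=
  ⟨(D x₀)⁻¹ * G x₀, nonsing_inv_mul_mem_unitaryGroup (h x₀ hx₀) hG, fun x hx ↦
    eq_mul_nonsing_inv_mul_of_mul_conjTranspose_eq (h x₀ hx₀) (h x hx) hG⟩

end Matrix

theorem diagonalizable_of_product_form_general (c₁ c₂ r₁ r₂ : ℝ)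
    (F : ℂ → Matrix (Fin 2) (Fin 2) ℂ)
    (hdet : ¬ ∀ z ∈ Rdom c₁ c₂ r₁ r₂, (F z).det = 0)
    (U : Matrix (Fin 2) (Fin 2) ℂ)
    (ψ₁ ψ₂ : ℂ → ℂ)
    (hprod : ∀ z ∈ Rdom c₁ c₂ r₁ r₂, ∀ w ∈ Rdom c₁ c₂ r₁ r₂,
      F z * (F w)ᴴ =
        U * (Matrix.diagonal ![ψ₁ z, ψ₂ z]) * (Matrix.diagonal ![ψ₁ w, ψ₂ w])ᴴ * Uᴴ) :
    ∃ V : Matrix (Fin 2) (Fin 2) ℂ, V ∈ Matrix.unitaryGroup (Fin 2) ℂ ∧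
      ∀ z ∈ Rdom c₁ c₂ r₁ r₂, F z = U * (Matrix.diagonal ![ψ₁ z, ψ₂ z]) * V := by
  obtain ⟨z₀, hz₀, hdet₀⟩ := not_forall₂.mp hdet
  have hprod₀ : ∀ z ∈ Rdom c₁ c₂ r₁ r₂, F z * (F z₀)ᴴ =
      (U * Matrix.diagonal ![ψ₁ z, ψ₂ z]) * (U * Matrix.diagonal ![ψ₁ z₀, ψ₂ z₀])ᴴ := by
    intro z hz
    rw [hprod z hz z₀ hz₀, Matrix.conjTranspose_mul]
    simp only [Matrix.mul_assoc]
  exact Matrix.exists_mem_unitaryGroup_eq_mul_of_mul_conjTranspose_eq hz₀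
    (isUnit_iff_ne_zero.mpr hdet₀) hprod₀

/-- If `F` is holomorphic on `R` with `det F` not identically zero and
`F(z)F(w)* = U D(z) D(w)* U*` for a fixed unitary `U` and a holomorphic diagonal
`D = diag(ψ₁, ψ₂)`, then `F = U D V` for some fixed unitary `V`. -/
theorem diagonalizable_of_product_form (c₁ c₂ r₁ r₂ : ℝ) (h : GoodParams c₁ c₂ r₁ r₂)
    (F : ℂ → Matrix (Fin 2) (Fin 2) ℂ)
    (hF : ∀ j k : Fin 2, DifferentiableOn ℂ (fun z => F z j k) (Rdom c₁ c₂ r₁ r₂))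
    (hdet : ¬ ∀ z ∈ Rdom c₁ c₂ r₁ r₂, (F z).det = 0)
    (U : Matrix (Fin 2) (Fin 2) ℂ) (hU : U ∈ Matrix.unitaryGroup (Fin 2) ℂ)
    (ψ₁ ψ₂ : ℂ → ℂ)
    (hψ₁ : DifferentiableOn ℂ ψ₁ (Rdom c₁ c₂ r₁ r₂))
    (hψ₂ : DifferentiableOn ℂ ψ₂ (Rdom c₁ c₂ r₁ r₂))
    (hprod : ∀ z ∈ Rdom c₁ c₂ r₁ r₂, ∀ w ∈ Rdom c₁ c₂ r₁ r₂,
      F z * (F w)ᴴ =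
        U * (Matrix.diagonal ![ψ₁ z, ψ₂ z]) * (Matrix.diagonal ![ψ₁ w, ψ₂ w])ᴴ * Uᴴ) :
    ∃ V : Matrix (Fin 2) (Fin 2) ℂ, V ∈ Matrix.unitaryGroup (Fin 2) ℂ ∧
      ∀ z ∈ Rdom c₁ c₂ r₁ r₂, F z = U * (Matrix.diagonal ![ψ₁ z, ψ₂ z]) * V :=
  diagonalizable_of_product_form_general c₁ c₂ r₁ r₂ F hdet U ψ₁ ψ₂ hprod

end
end
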